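/- Let M^I = ⊕_{i=1}^{m} J_{c_i} be a preinjective Kronecker representation and N^P = ⊕_{j=1}^{n} Q_{d_j} a preprojective Kronecker representation over an algebraically closed field. Then N^P is a subrepresentation of M^I if and only if Σ_{i=1}^{m} (c_i − 1) ≥ Σ_{j=1}^{n} d_j. -/

import Mathlib

open Matrix

/-- `α` of the preprojective representation `⊕ⱼ Q_{d j}`: blocks `[I;0] : K^{k-1} → K^k`. -/
def QsumA (K : Type*) [Field K] (n : ℕ) (d : ℕ → ℕ) :
    Matrix (Σ j : Fin n, Fin (d (j.1 + 1))) (Σ j : Fin n, Fin (d (j.1 + 1) - 1)) K :=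
  fun x y => if x.1 = y.1 ∧ (x.2 : ℕ) = (y.2 : ℕ) then 1 else 0

/-- `β` of `⊕ⱼ Q_{d j}`: blocks `[0;I] : K^{k-1} → K^k`. -/
def QsumB (K : Type*) [Field K] (n : ℕ) (d : ℕ → ℕ) :
    Matrix (Σ j : Fin n, Fin (d (j.1 + 1))) (Σ j : Fin n, Fin (d (j.1 + 1) - 1)) K :=
  fun x y => if x.1 = y.1 ∧ (x.2 : ℕ) = (y.2 : ℕ) + 1 then 1 else 0

/-- `α` of the preinjective representation `⊕ᵢ J_{c i}`: blocks `[I 0] : K^k → K^{k-1}`. -/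
def JsumA (K : Type*) [Field K] (m : ℕ) (c : ℕ → ℕ) :
    Matrix (Σ i : Fin m, Fin (c (i.1 + 1) - 1)) (Σ i : Fin m, Fin (c (i.1 + 1))) K :=
  fun x y => if x.1 = y.1 ∧ (x.2 : ℕ) = (y.2 : ℕ) then 1 else 0

/-- `β` of `⊕ᵢ J_{c i}`: blocks `[0 I] : K^k → K^{k-1}`. -/
def JsumB (K : Type*) [Field K] (m : ℕ) (c : ℕ → ℕ) :
    Matrix (Σ i : Fin m, Fin (c (i.1 + 1) - 1)) (Σ i : Fin m, Fin (c (i.1 + 1))) K :=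
  fun x y => if x.1 = y.1 ∧ (y.2 : ℕ) = (x.2 : ℕ) + 1 then 1 else 0

/-!
Comparing dimensions, an injective `ψ` already gives `∑ d j ≤ ∑ (c i - 1)`. Conversely, lay
the sink bases of the `J_{c i}` out on a line block after block, each block in reverse order, and
those of the `Q_{d j}` on a second line block after block in natural order: on both lines a
source basis vector has its `β`-image one step past its `α`-image. If the second line is not
longer than the first, matching equal positions gives an injective `ψ`, and `φ` sends a source
basis vector `v` of a `Q_{d j}` to the sum of the source basis vectors of the `J_{c i}` whose
`α`-image sits at the position of `α v` or whose `β`-image sits at that of `β v`: one vector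
inside a block, or the two end vectors of consecutive blocks.
-/

open Finset

lemma Sigma.fin_ext_iff {ι : Type*} {g : ι → ℕ} {x y : Σ i, Fin (g i)} :
    x = y ↔ x.1 = y.1 ∧ (x.2 : ℕ) = y.2 := by
  rw [Sigma.ext_iff]
  exact and_congr_right fun h => Fin.heq_ext_iff (congrArg g h)

lemma Fin.sum_univ_succ_eq_sum_Icc (g : ℕ → ℕ) (m : ℕ) :
    ∑ i : Fin m, g (i + 1) = ∑ i ∈ Icc 1 m, g i := by
  rw [← Ico_add_one_right_eq_Icc, sum_Ico_eq_sum_range, Nat.add_sub_cancel,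
    Fin.sum_univ_eq_sum_range (fun i => g (i + 1))]
  simp only [add_comm]

lemma card_sigma_fin_eq_sum_Icc (g : ℕ → ℕ) (m : ℕ) :
    Fintype.card (Σ i : Fin m, Fin (g (i.1 + 1))) = ∑ i ∈ Icc 1 m, g i := by
  rw [Fintype.card_sigma]
  simp only [Fintype.card_fin, Fin.sum_univ_succ_eq_sum_Icc]

lemma Matrix.mulVecLin_injective_of_forall_exists_row_eq_single {R ι κ : Type*}
    [CommSemiring R] [Fintype κ] [DecidableEq κ] {M : Matrix ι κ R}
    (h : ∀ j, ∃ i, M i = Pi.single j 1) : Function.Injective M.mulVecLin := by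
  intro v w hvw
  funext j
  obtain ⟨i, hi⟩ := h j
  simpa [mulVecLin_apply, mulVec, hi, single_dotProduct] using congrFun hvw i

section

variable {K : Type*} [Field K] {m : ℕ} {f : ℕ → ℕ}

def sigmaCastSucc (x : Σ i : Fin m, Fin (f (i.1 + 1) - 1)) : Σ i : Fin m, Fin (f (i.1 + 1)) :=
  ⟨x.1, Fin.castLE (Nat.sub_le _ _) x.2⟩

def sigmaSucc (x : Σ i : Fin m, Fin (f (i.1 + 1) - 1)) : Σ i : Fin m, Fin (f (i.1 + 1)) :=
  ⟨x.1, ⟨x.2 + 1, by omega⟩⟩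

lemma sigmaCastSucc_injective : Function.Injective (sigmaCastSucc (m := m) (f := f)) :=
  fun _ _ h => by rwa [Sigma.fin_ext_iff] at h ⊢

lemma eq_sigmaCastSucc_iff {x : Σ i : Fin m, Fin (f (i.1 + 1))} {y} :
    x = sigmaCastSucc y ↔ x.1 = y.1 ∧ (x.2 : ℕ) = y.2 :=
  Sigma.fin_ext_iff

lemma eq_sigmaSucc_iff {x : Σ i : Fin m, Fin (f (i.1 + 1))} {y} :
    x = sigmaSucc y ↔ x.1 = y.1 ∧ (x.2 : ℕ) = y.2 + 1 :=
  Sigma.fin_ext_iff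

lemma finSigmaFinEquiv_sigmaSucc (y : Σ i : Fin m, Fin (f (i.1 + 1) - 1)) :
    (finSigmaFinEquiv (sigmaSucc y) : ℕ) = finSigmaFinEquiv (sigmaCastSucc y) + 1 := by
  simp only [finSigmaFinEquiv_apply, sigmaSucc, sigmaCastSucc, Fin.val_castLE, add_assoc]

lemma JsumA_mul {ι : Type*} (M : Matrix (Σ i : Fin m, Fin (f (i.1 + 1))) ι K) :
    JsumA K m f * M = M.submatrix sigmaCastSucc id := by
  ext x y
  simp only [mul_apply, JsumA, eq_comm (a := x.1), eq_comm (a := (x.2 : ℕ)),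
    ← eq_sigmaCastSucc_iff, ite_mul, one_mul, zero_mul, sum_ite_eq', mem_univ, if_true,
    submatrix_apply, id]

lemma JsumB_mul {ι : Type*} (M : Matrix (Σ i : Fin m, Fin (f (i.1 + 1))) ι K) :
    JsumB K m f * M = M.submatrix sigmaSucc id := by
  ext x y
  simp only [mul_apply, JsumB, eq_comm (a := x.1), ← eq_sigmaSucc_iff, ite_mul, one_mul,
    zero_mul, sum_ite_eq', mem_univ, if_true, submatrix_apply, id]

lemma mul_QsumA {ι : Type*} [Fintype ι] (M : Matrix ι (Σ i : Fin m, Fin (f (i.1 + 1))) K) :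
    M * QsumA K m f = M.submatrix id sigmaCastSucc := by
  ext x y
  simp only [mul_apply, QsumA, ← eq_sigmaCastSucc_iff, mul_ite, mul_one, mul_zero, sum_ite_eq',
    mem_univ, if_true, submatrix_apply, id]

lemma mul_QsumB {ι : Type*} [Fintype ι] (M : Matrix ι (Σ i : Fin m, Fin (f (i.1 + 1))) K) :
    M * QsumB K m f = M.submatrix id sigmaSucc := by
  ext x y
  simp only [mul_apply, QsumB, ← eq_sigmaSucc_iff, mul_ite, mul_one, mul_zero, sum_ite_eq',
    mem_univ, if_true, submatrix_apply, id]

def sinkDim (c : ℕ → ℕ) (i : ℕ) : ℕ := ∑ k ∈ Icc 1 i, (c k - 1)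

lemma exists_add_add_one_eq_sinkDim (c : ℕ → ℕ) {p : ℕ} :
    ∀ {m}, p < sinkDim c m → ∃ i < m, ∃ a < c (i + 1) - 1, p + a + 1 = sinkDim c (i + 1)
  | 0, hp => by simp [sinkDim] at hp
  | m + 1, hp => by
    have hsucc : sinkDim c (m + 1) = sinkDim c m + (c (m + 1) - 1) :=
      sum_Icc_succ_top (by omega) _
    by_cases hpm : p < sinkDim c m
    · obtain ⟨i, hi, a, ha, h⟩ := exists_add_add_one_eq_sinkDim c hpm
      exact ⟨i, by omega, a, ha, h⟩
    · exact ⟨m, by omega, sinkDim c (m + 1) - p - 1, by omega, by omega⟩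

/-- Reading `sinkDim c (i + 1) - 1 - a` as the position of row `(i, a)` on a line where blocks
of lengths `c (i + 1) - 1` follow each other, each in reverse order, this matches rows and
columns at equal positions; it is stated additively to avoid truncated subtraction. -/
def chainMatrix (c : ℕ → ℕ) {e : Fin m → ℕ} {ι : Type*} (p : ι → ℕ) :
    Matrix (Σ i : Fin m, Fin (e i)) ι K :=
  of fun x y => if p y + x.2 + 1 = sinkDim c (x.1 + 1) then 1 else 0

@[simp]
lemma chainMatrix_apply (c : ℕ → ℕ) {e : Fin m → ℕ} {ι : Type*} (p : ι → ℕ) x y :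
    (chainMatrix c p : Matrix (Σ i : Fin m, Fin (e i)) ι K) x y =
      if p y + x.2 + 1 = sinkDim c (x.1 + 1) then 1 else 0 :=
  rfl

lemma chainMatrix_mulVecLin_injective {c : ℕ → ℕ} {e : Fin m → ℕ}
    (he : ∀ i, c (i.1 + 1) - 1 ≤ e i) {ι : Type*} [Fintype ι] [DecidableEq ι]
    {p : ι → ℕ} (hp : Function.Injective p) (hlt : ∀ y, p y < sinkDim c m) :
    Function.Injective (chainMatrix c p : Matrix (Σ i : Fin m, Fin (e i)) ι K).mulVecLin := by
  refine mulVecLin_injective_of_forall_exists_row_eq_single fun y => ?_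
  obtain ⟨i, hi, a, ha, hy⟩ := exists_add_add_one_eq_sinkDim c (hlt y)
  refine ⟨⟨⟨i, hi⟩, ⟨a, ha.trans_le (he ⟨i, hi⟩)⟩⟩, funext fun y' => ?_⟩
  simp only [chainMatrix_apply, ← hy, Nat.add_right_cancel_iff, hp.eq_iff, Pi.single_apply]

variable (K m) (n : ℕ) (c d : ℕ → ℕ)

def sourceEmbedding :
    Matrix (Σ i : Fin m, Fin (c (i.1 + 1))) (Σ j : Fin n, Fin (d (j.1 + 1) - 1)) K :=
  chainMatrix c fun y => finSigmaFinEquiv (sigmaCastSucc y)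

def sinkEmbedding :
    Matrix (Σ i : Fin m, Fin (c (i.1 + 1) - 1)) (Σ j : Fin n, Fin (d (j.1 + 1))) K :=
  chainMatrix c fun y => finSigmaFinEquiv y

lemma JsumA_mul_sourceEmbedding :
    JsumA K m c * sourceEmbedding K m n c d = sinkEmbedding K m n c d * QsumA K n d := by
  rw [JsumA_mul, mul_QsumA]
  rfl

lemma JsumB_mul_sourceEmbedding :
    JsumB K m c * sourceEmbedding K m n c d = sinkEmbedding K m n c d * QsumB K n d := by
  rw [JsumB_mul, mul_QsumB]
  ext x y
  simp only [submatrix_apply, id, sourceEmbedding, sinkEmbedding, chainMatrix_apply,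
    finSigmaFinEquiv_sigmaSucc]
  simp only [sigmaSucc]
  ac_rfl

end

theorem preprojective_subrep_preinjective_iff_general (K : Type*) [Field K]
    (m n : ℕ) (c d : ℕ → ℕ) :
    (∃ (φ : Matrix (Σ i : Fin m, Fin (c (i.1 + 1))) (Σ j : Fin n, Fin (d (j.1 + 1) - 1)) K)
       (ψ : Matrix (Σ i : Fin m, Fin (c (i.1 + 1) - 1)) (Σ j : Fin n, Fin (d (j.1 + 1))) K),
        Function.Injective φ.mulVecLin ∧ Function.Injective ψ.mulVecLin ∧
        JsumA K m c * φ = ψ * QsumA K n d ∧ JsumB K m c * φ = ψ * QsumB K n d) ↔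
    (∑ j ∈ Finset.Icc 1 n, d j ≤ ∑ i ∈ Finset.Icc 1 m, (c i - 1)) := by
  constructor
  · rintro ⟨-, ψ, -, hψ, -, -⟩
    have hdim := LinearMap.finrank_le_finrank_of_injective hψ
    rwa [Module.finrank_fintype_fun_eq_card, Module.finrank_fintype_fun_eq_card,
      card_sigma_fin_eq_sum_Icc, card_sigma_fin_eq_sum_Icc (fun i => c i - 1)] at hdim
  · intro hle
    have hpos (y : Σ j : Fin n, Fin (d (j.1 + 1))) : (finSigmaFinEquiv y : ℕ) < sinkDim c m :=
      ((finSigmaFinEquiv y).isLt.trans_eq (Fin.sum_univ_succ_eq_sum_Icc d n)).trans_le hle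
    have hinj := Fin.val_injective.comp
      (finSigmaFinEquiv (n := fun j : Fin n => d (j + 1))).injective
    exact ⟨sourceEmbedding K m n c d, sinkEmbedding K m n c d,
      chainMatrix_mulVecLin_injective (fun _ => Nat.sub_le _ _)
        (hinj.comp sigmaCastSucc_injective) (fun y => hpos _),
      chainMatrix_mulVecLin_injective (fun _ => le_rfl) hinj hpos,
      JsumA_mul_sourceEmbedding K m n c d, JsumB_mul_sourceEmbedding K m n c d⟩

/-- the preprojective representation `N^P = ⊕ⱼ Q_{d j}` is a
subrepresentation of the preinjective representation `M^I = ⊕ᵢ J_{c i}` iff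
`Σᵢ (c i − 1) ≥ Σⱼ d j`. -/
theorem preprojective_subrep_preinjective_iff (K : Type*) [Field K] [IsAlgClosed K]
    (m n : ℕ) (c d : ℕ → ℕ)
    (hc_pos : ∀ i, 1 ≤ i → i ≤ m → 1 ≤ c i)
    (hd_pos : ∀ j, 1 ≤ j → j ≤ n → 1 ≤ d j) :
    (∃ (φ : Matrix (Σ i : Fin m, Fin (c (i.1 + 1))) (Σ j : Fin n, Fin (d (j.1 + 1) - 1)) K)
       (ψ : Matrix (Σ i : Fin m, Fin (c (i.1 + 1) - 1)) (Σ j : Fin n, Fin (d (j.1 + 1))) K),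
        Function.Injective φ.mulVecLin ∧ Function.Injective ψ.mulVecLin ∧
        JsumA K m c * φ = ψ * QsumA K n d ∧ JsumB K m c * φ = ψ * QsumB K n d) ↔
    (∑ j ∈ Finset.Icc 1 n, d j ≤ ∑ i ∈ Finset.Icc 1 m, (c i - 1)) :=
  preprojective_subrep_preinjective_iff_general K m n c d
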